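/- arXiv:2010.09307 — 2 statements merged into one kernel-verified Lean document; each statement's English description precedes it below -/
import Mathlib

section
/- For every real number n ≥ 0, and for all s ∈ ℝ and t > 0, L̂_d applied to the function (s,t) ↦ t^{n+1/2} Ê(s,t) equals (n+1) t^{n−1/2} Ê(s,t). -/
/-- The complementary error function `erfc z = (2/√π) ∫_z^∞ e^{-u²} du`. -/
noncomputable def erfc (z : ℝ) : ℝ :=
  (2 / Real.sqrt Real.pi) * ∫ u in Set.Ioi z, Real.exp (-u ^ 2)

/-- `ψ̂₀(s,t) = erfc((d(t)-s)/(2√(εt)))`. -/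
noncomputable def psi0 (ε : ℝ) (d : ℝ → ℝ) (s t : ℝ) : ℝ :=
  erfc ((d t - s) / (2 * Real.sqrt (ε * t)))

/-- `Ê(s,t) = exp(-(s-d(t))²/(4εt))`. -/
noncomputable def Ehat (ε : ℝ) (d : ℝ → ℝ) (s t : ℝ) : ℝ :=
  Real.exp (-(s - d t) ^ 2 / (4 * ε * t))

/-- The operator `L̂_d F = -ε F_ss + â(d(t),t) F_s + F_t`. -/
noncomputable def Ld (ε : ℝ) (a : ℝ → ℝ → ℝ) (d : ℝ → ℝ) (F : ℝ → ℝ → ℝ) (s t : ℝ) : ℝ :=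
  -ε * iteratedDeriv 2 (fun x => F x t) s
    + a (d t) t * deriv (fun x => F x t) s
    + deriv (fun τ => F s τ) t

/-!
`Ê` is the Gaussian heat kernel centred at the moving point `d(t)`, without its normalising
factor `t^{-1/2}`. Because the centre moves with the drift, `d' = â(d, t)`, the kernel `t^{-1/2} Ê`
solves `L̂_d F = 0`, i.e. `L̂_d Ê = Ê / (2t)`. As `L̂_d` is first order in `t`, the product rule gives
`L̂_d (t^p Ê) = p t^{p-1} Ê + t^p Ê / (2t) = (p + 1/2) t^{p-1} Ê`; take `p = n + 1/2`.
-/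

lemma hasDerivAt_Ehat_space (ε : ℝ) (d : ℝ → ℝ) (s t : ℝ) :
    HasDerivAt (fun x => Ehat ε d x t) (-(s - d t) / (2 * ε * t) * Ehat ε d s t) s := by
  have h := ((((hasDerivAt_id' s).sub_const (d t)).fun_pow 2).fun_neg.div_const (4 * ε * t)).exp
  unfold Ehat
  convert h using 1
  ring

lemma iteratedDeriv_two_Ehat_space (ε : ℝ) (d : ℝ → ℝ) (s t : ℝ) :
    iteratedDeriv 2 (fun x => Ehat ε d x t) s
      = ((s - d t) ^ 2 / (2 * ε * t) ^ 2 - 1 / (2 * ε * t)) * Ehat ε d s t := by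
  have hderiv : deriv (fun x => Ehat ε d x t) = fun x => -(x - d t) / (2 * ε * t) * Ehat ε d x t :=
    funext fun x => (hasDerivAt_Ehat_space ε d x t).deriv
  have hcoef : HasDerivAt (fun x => -(x - d t) / (2 * ε * t)) (-1 / (2 * ε * t)) s := by
    simpa using ((hasDerivAt_id s).sub_const (d t)).fun_neg.div_const (2 * ε * t)
  rw [iteratedDeriv_succ, iteratedDeriv_one, hderiv,
    (hcoef.fun_mul (hasDerivAt_Ehat_space ε d s t)).deriv]
  ring

lemma hasDerivAt_Ehat_time {ε : ℝ} {d : ℝ → ℝ} {s t v : ℝ} (hε : ε ≠ 0) (ht : t ≠ 0) (hd : HasDerivAt d v t) :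
    HasDerivAt (fun τ => Ehat ε d s τ)
      (((s - d t) * v / (2 * ε * t) + (s - d t) ^ 2 / (4 * ε * t ^ 2)) * Ehat ε d s t) t := by
  have hden : HasDerivAt (fun τ => 4 * ε * τ) (4 * ε * 1) t := (hasDerivAt_id t).const_mul (4 * ε)
  have h := ((((hasDerivAt_const t s).fun_sub hd).fun_pow 2).fun_neg.fun_div hden (by positivity)).exp
  unfold Ehat
  convert h using 1
  field_simp
  ring

lemma Ld_Ehat {ε : ℝ} {a : ℝ → ℝ → ℝ} {d : ℝ → ℝ} {s t : ℝ} (hε : ε ≠ 0) (ht : t ≠ 0) (hd : HasDerivAt d (a (d t) t) t) :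
    Ld ε a d (Ehat ε d) s t = Ehat ε d s t / (2 * t) := by
  rw [Ld, iteratedDeriv_two_Ehat_space, (hasDerivAt_Ehat_space ε d s t).deriv,
    (hasDerivAt_Ehat_time hε ht hd).deriv]
  field_simp
  ring

lemma Ld_time_mul {ε : ℝ} {a : ℝ → ℝ → ℝ} {d g : ℝ → ℝ} {F : ℝ → ℝ → ℝ} {s t g' : ℝ}
    (hg : HasDerivAt g g' t) (hF : DifferentiableAt ℝ (fun τ => F s τ) t) :
    Ld ε a d (fun s' t' => g t' * F s' t') s t = g t * Ld ε a d F s t + g' * F s t := by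
  simp only [Ld, iteratedDeriv_const_mul_field, deriv_const_mul_field]
  rw [(hg.fun_mul hF.hasDerivAt).deriv]
  ring

lemma Ld_rpow_mul_Ehat {ε : ℝ} {a : ℝ → ℝ → ℝ} {d : ℝ → ℝ} {s t : ℝ} (p : ℝ) (hε : ε ≠ 0)
    (ht : t ≠ 0) (hd : HasDerivAt d (a (d t) t) t) :
    Ld ε a d (fun s' t' => t' ^ p * Ehat ε d s' t') s t = (p + 1 / 2) * t ^ (p - 1) * Ehat ε d s t := by
  rw [Ld_time_mul (Real.hasDerivAt_rpow_const (Or.inl ht))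
      (hasDerivAt_Ehat_time hε ht hd).differentiableAt,
    Ld_Ehat hε ht hd, Real.rpow_sub_one ht]
  field_simp
  ring

theorem stmt_3_general
    (ε : ℝ) (hε : 0 < ε)
    (a : ℝ → ℝ → ℝ)
    (d : ℝ → ℝ)
    (hdODE : ∀ t : ℝ, 0 ≤ t → HasDerivAt d (a (d t) t) t) :
    ∀ n : ℝ, 0 ≤ n → ∀ s t : ℝ, 0 < t →
      Ld ε a d (fun s' t' => t' ^ (n + 1 / 2) * Ehat ε d s' t') s t
        = (n + 1) * t ^ (n - 1 / 2) * Ehat ε d s t := by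
  intro n _ s t ht
  rw [Ld_rpow_mul_Ehat _ hε.ne' ht.ne' (hdODE t ht.le), show n + 1 / 2 - 1 = n - 1 / 2 by ring]
  ring

/-- for every real `n ≥ 0`, `Ld` applied to the function
`(s,t) ↦ t^(n+1/2) * Ehat s t` equals `(n+1) t^(n-1/2) Ehat s t`. -/
theorem stmt_3
    (ε d₀ : ℝ) (hε : 0 < ε) (hd₀ : d₀ ∈ Set.Ioo (0 : ℝ) 1)
    (a : ℝ → ℝ → ℝ) (haC1 : ContDiff ℝ 1 (fun p : ℝ × ℝ => a p.1 p.2))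
    (hapos : ∀ s t : ℝ, 0 ≤ t → 0 < a s t)
    (d : ℝ → ℝ) (hdC1 : ContDiff ℝ 1 d)
    (hdODE : ∀ t : ℝ, 0 ≤ t → HasDerivAt d (a (d t) t) t)
    (hd0 : d 0 = d₀) :
    ∀ n : ℝ, 0 ≤ n → ∀ s t : ℝ, 0 < t →
      Ld ε a d (fun s' t' => t' ^ (n + 1 / 2) * Ehat ε d s' t') s t
        = (n + 1) * t ^ (n - 1 / 2) * Ehat ε d s t :=
  stmt_3_general ε hε a d hdODE
end

section
/- The function ψ̂₁ satisfies ∂ψ̂₁/∂s(s,t) = −ψ̂₀(s,t) and (L̂_d ψ̂₁)(s,t) = 0 for all s ∈ ℝ and t > 0. -/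
/-!
Write `ψ̂₁(s,t) = Φ(d(t) - s, t)` with
`Φ(y,t) = y erfc(y/(2√(εt))) - 2√(εt/π) exp(-y²/(4εt))`.
Then `∂_y Φ = erfc(y/(2√(εt)))`, which gives `∂_s ψ̂₁ = -ψ̂₀`, and `Φ` solves the heat equation
`Φ_t = ε Φ_yy`. By the chain rule `L̂_d ψ̂₁ = Φ_t - ε Φ_yy + (d' - â(d,t)) Φ_y`, and both terms
vanish since `d' = â(d,t)`.
-/

open Real MeasureTheory Set

theorem hasDerivAt_integral_Ioi {E : Type*} [NormedAddCommGroup E] [NormedSpace ℝ E]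
    [CompleteSpace E] {f : ℝ → E} (hf : Integrable f) (hc : Continuous f) (z : ℝ) :
    HasDerivAt (fun z => ∫ x in Ioi z, f x) (-f z) z := by
  have h : (fun z => ∫ x in Ioi z, f x) = fun z => (∫ x in Ioi 0, f x) - ∫ x in 0..z, f x := by
    funext z
    exact eq_sub_of_add_eq'
      (intervalIntegral.integral_interval_add_Ioi hf.integrableOn hf.integrableOn)
  rw [h]
  exact ((hc.integral_hasStrictDerivAt 0 z).hasDerivAt.const_sub _)

theorem hasDerivAt_erfc (z : ℝ) :
    HasDerivAt erfc (-(2 / √π) * exp (-z ^ 2)) z := by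
  have hint : Integrable fun u : ℝ => exp (-u ^ 2) := by
    simpa using integrable_exp_neg_mul_sq one_pos
  exact ((hasDerivAt_integral_Ioi hint (by fun_prop) z).const_mul (2 / √π)).congr_deriv
    (by ring)

@[fun_prop]
theorem differentiable_erfc : Differentiable ℝ erfc :=
  fun z => (hasDerivAt_erfc z).differentiableAt

theorem DifferentiableAt.comp_curve_of_partials {F : ℝ → ℝ → ℝ} {γ : ℝ → ℝ} {t γ' Fy Ft : ℝ}
    (hF : DifferentiableAt ℝ (Function.uncurry F) (γ t, t))
    (hy : HasDerivAt (fun y => F y t) Fy (γ t)) (ht : HasDerivAt (F (γ t)) Ft t)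
    (hγ : HasDerivAt γ γ' t) :
    HasDerivAt (fun τ => F (γ τ) τ) (γ' * Fy + Ft) t := by
  set L := fderiv ℝ (Function.uncurry F) (γ t, t)
  have hL : HasFDerivAt (Function.uncurry F) L (γ t, t) := hF.hasFDerivAt
  have hLy : L (1, 0) = Fy := by
    have : HasDerivAt (fun y => F y t) (L (1, 0)) (γ t) :=
      hL.comp_hasDerivAt (f := fun y => (y, t)) (γ t)
        ((hasDerivAt_id _).prodMk (hasDerivAt_const _ t))
    exact this.unique hy
  have hLt : L (0, 1) = Ft := by
    have : HasDerivAt (F (γ t)) (L (0, 1)) t :=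
      hL.comp_hasDerivAt (f := fun τ => (γ t, τ)) t
        ((hasDerivAt_const _ (γ t)).prodMk (hasDerivAt_id _))
    exact this.unique ht
  have : HasDerivAt (fun τ => F (γ τ) τ) (L (γ', 1)) t :=
    hL.comp_hasDerivAt (f := fun τ => (γ τ, τ)) t (hγ.prodMk (hasDerivAt_id t))
  convert this using 1
  rw [← hLy, ← hLt, ← smul_eq_mul, ← L.map_smul, ← L.map_add]
  simp

/-- `-2√(εt) · ierfc (y / (2√(εt)))`, with `ierfc` the first iterated integral of `erfc`. -/
noncomputable def heatIerfc (ε y t : ℝ) : ℝ :=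
  y * erfc (y / (2 * √(ε * t))) - 2 * √(ε * t / π) * exp (-y ^ 2 / (4 * ε * t))

section
variable {ε t : ℝ} (hεt : 0 < ε * t)
include hεt

theorem exp_neg_sq_div_two_sqrt (y : ℝ) :
    exp (-(y / (2 * √(ε * t))) ^ 2) = exp (-y ^ 2 / (4 * ε * t)) := by
  rw [div_pow, mul_pow, sq_sqrt hεt.le]
  ring_nf

theorem hasDerivAt_erfc_div_two_sqrt (y : ℝ) :
    HasDerivAt (fun y => erfc (y / (2 * √(ε * t))))
      (-(exp (-y ^ 2 / (4 * ε * t)) / (√π * √(ε * t)))) y := by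
  refine ((hasDerivAt_erfc _).comp y ((hasDerivAt_id y).div_const (2 * √(ε * t)))).congr_deriv ?_
  rw [id, exp_neg_sq_div_two_sqrt hεt]
  field_simp

theorem hasDerivAt_heatIerfc_fst (y : ℝ) :
    HasDerivAt (fun y => heatIerfc ε y t) (erfc (y / (2 * √(ε * t)))) y := by
  have hε : ε ≠ 0 := left_ne_zero_of_mul hεt.ne'
  have ht : t ≠ 0 := right_ne_zero_of_mul hεt.ne'
  have hE : HasDerivAt (fun y => exp (-y ^ 2 / (4 * ε * t)))
      (exp (-y ^ 2 / (4 * ε * t)) * (-(2 * y) / (4 * ε * t))) y := by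
    refine (((hasDerivAt_id' y).pow 2).neg.div_const (4 * ε * t)).exp.congr_deriv ?_
    simp
  refine ((hasDerivAt_id' y).mul (hasDerivAt_erfc_div_two_sqrt hεt y)).sub
    (hE.const_mul (2 * √(ε * t / π))) |>.congr_deriv ?_
  rw [sqrt_div' _ pi_pos.le]
  field_simp
  rw [sq_sqrt hεt.le]
  ring

theorem hasDerivAt_heatIerfc_snd (y : ℝ) :
    HasDerivAt (heatIerfc ε y) (-(ε * (exp (-y ^ 2 / (4 * ε * t)) / (√π * √(ε * t))))) t := by
  have hε : ε ≠ 0 := left_ne_zero_of_mul hεt.ne'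
  have ht : t ≠ 0 := right_ne_zero_of_mul hεt.ne'
  have hlin : HasDerivAt (fun τ => ε * τ) ε t := by simpa using (hasDerivAt_id' t).const_mul ε
  have hsqrt := hlin.sqrt hεt.ne'
  have herfc := (hasDerivAt_erfc _).comp t
    ((hasDerivAt_const t y).div (hsqrt.const_mul 2) (by positivity))
  have hcoef := ((hlin.div_const π).sqrt (by positivity)).const_mul 2
  have hexp := ((hasDerivAt_const t (-y ^ 2)).div ((hasDerivAt_id' t).const_mul (4 * ε))
    (by simp [hε, ht])).exp
  refine ((herfc.const_mul y).sub (hcoef.mul hexp)).congr_deriv ?_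
  simp only [Pi.div_apply]
  rw [exp_neg_sq_div_two_sqrt hεt, sqrt_div' _ pi_pos.le]
  field_simp
  rw [sq_sqrt hεt.le]
  ring_nf
  rw [sq_sqrt pi_pos.le]

theorem differentiableAt_uncurry_heatIerfc (y : ℝ) :
    DifferentiableAt ℝ (Function.uncurry (heatIerfc ε)) (y, t) := by
  have hε : ε ≠ 0 := left_ne_zero_of_mul hεt.ne'
  have ht : t ≠ 0 := right_ne_zero_of_mul hεt.ne'
  unfold heatIerfc Function.uncurry
  fun_prop (disch := simp [hεt.ne', hε, ht, pi_ne_zero, (sqrt_pos.2 hεt).ne'])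

end

theorem psi1_eq_heatIerfc (ε : ℝ) (d : ℝ → ℝ) (x t : ℝ) :
    (d t - x) * psi0 ε d x t - 2 * √(ε * t / π) * Ehat ε d x t = heatIerfc ε (d t - x) t := by
  rw [psi0, Ehat, heatIerfc, sub_sq_comm x]

theorem stmt_4_general
    (ε : ℝ) (hε : 0 < ε)
    (a : ℝ → ℝ → ℝ)
    (d : ℝ → ℝ)
    (hdODE : ∀ t : ℝ, 0 ≤ t → HasDerivAt d (a (d t) t) t) :
    ∀ s t : ℝ, 0 < t →
      deriv (fun x => (d t - x) * psi0 ε d x t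
          - 2 * Real.sqrt (ε * t / Real.pi) * Ehat ε d x t) s
        = -psi0 ε d s t ∧
      Ld ε a d
          (fun s' t' => (d t' - s') * psi0 ε d s' t'
            - 2 * Real.sqrt (ε * t' / Real.pi) * Ehat ε d s' t') s t
        = 0 := by
  intro s t ht
  have hεt := mul_pos hε ht
  have hψ_s (x : ℝ) : HasDerivAt (fun x => heatIerfc ε (d t - x) t) (-psi0 ε d x t) x :=
    ((hasDerivAt_heatIerfc_fst hεt (d t - x)).comp x
      ((hasDerivAt_id' x).const_sub (d t))).congr_deriv (by rw [psi0]; ring)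
  have hψ_ss : HasDerivAt (fun x => -psi0 ε d x t)
      (-(exp (-(d t - s) ^ 2 / (4 * ε * t)) / (√π * √(ε * t)))) s :=
    ((hasDerivAt_erfc_div_two_sqrt hεt (d t - s)).comp s
      ((hasDerivAt_id' s).const_sub (d t))).neg.congr_deriv (by ring)
  have hψ_t := (differentiableAt_uncurry_heatIerfc hεt _).comp_curve_of_partials
    (hasDerivAt_heatIerfc_fst hεt _) (hasDerivAt_heatIerfc_snd hεt _) ((hdODE t ht.le).sub_const s)
  simp only [Ld, psi1_eq_heatIerfc]
  rw [iteratedDeriv_succ, iteratedDeriv_one, funext fun x => (hψ_s x).deriv, hψ_ss.deriv,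
    hψ_t.deriv]
  refine ⟨rfl, ?_⟩
  simp only [psi0]
  ring

/-- the function `psih 1` satisfies `∂(psih 1)/∂s = -psi0` and
`Ld (psih 1) = 0` for all `s : ℝ` and `t > 0`. -/
theorem stmt_4
    (ε d₀ : ℝ) (hε : 0 < ε) (hd₀ : d₀ ∈ Set.Ioo (0 : ℝ) 1)
    (a : ℝ → ℝ → ℝ) (haC1 : ContDiff ℝ 1 (fun p : ℝ × ℝ => a p.1 p.2))
    (hapos : ∀ s t : ℝ, 0 ≤ t → 0 < a s t)
    (d : ℝ → ℝ) (hdC1 : ContDiff ℝ 1 d)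
    (hdODE : ∀ t : ℝ, 0 ≤ t → HasDerivAt d (a (d t) t) t)
    (hd0 : d 0 = d₀) :
    ∀ s t : ℝ, 0 < t →
      deriv (fun x => (d t - x) * psi0 ε d x t
          - 2 * Real.sqrt (ε * t / Real.pi) * Ehat ε d x t) s
        = -psi0 ε d s t ∧
      Ld ε a d
          (fun s' t' => (d t' - s') * psi0 ε d s' t'
            - 2 * Real.sqrt (ε * t' / Real.pi) * Ehat ε d s' t') s t
        = 0 :=
  stmt_4_general ε hε a d hdODE
end
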